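/- arXiv:1806.08713 — 2 statements merged into one kernel-verified Lean document; each statement's English description precedes it below -/
import Mathlib

section
/- The number of colored pairs Φ is not an ordinal potential function for the uniform swap Schelling game on non-regular networks: there exist a finite connected non-regular graph G, window size w = 1, tolerance parameter τ = 6/7, disjoint agent sets A and B, a bijective placement p, and an improving swap of two agents producing the placement p' such that Φ(p') > Φ(p). -/
/-!
Take the spider with centre `0`, legs `3, 4, 5` and the two-edge leg `0 - 1 - 2`, agents `2, 3`
of type `A` and the rest of type `B`, each agent on the node of its own number, and let the
`B`-agent `0` on the centre swap with the `A`-agent `2` on the tip of the long leg. Agent `0`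
goes from ratio `3/4 < 6/7` to `1`, agent `2` from `0` to `1/4`, so both improve; but the
centre has degree `4`, and the `A`-agent arriving there meets three `B`-agents, so the coloured
edges go from `{0,3}, {1,2}` to `{0,1}, {0,4}, {0,5}`: `Φ` rises from `2` to `3`.
-/

open SimpleGraph Finset

namespace Schelling

variable {V I : Type*}

/-- The `w`-neighborhood of a node `u`: all nodes `v ≠ u` with `d_G(u,v) ≤ w`. -/
def nbhd (G : SimpleGraph V) (w : ℕ) (u : V) : Set V :=
  {v | v ≠ u ∧ G.dist u v ≤ w}

/-- `|N⁺(p(x))|`: number of nodes in the `w`-neighborhood of `p x` occupied by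
agents of the same type as `x`. -/
noncomputable def sCount (G : SimpleGraph V) (w : ℕ) (tp : I → Bool) (p : I → V) (x : I) : ℕ :=
  {v | v ∈ nbhd G w (p x) ∧ ∃ y, p y = v ∧ tp y = tp x}.ncard

/-- `|N⁻(p(x))|`: number of nodes in the `w`-neighborhood of `p x` occupied by
agents of the other type. -/
noncomputable def dCount (G : SimpleGraph V) (w : ℕ) (tp : I → Bool) (p : I → V) (x : I) : ℕ :=
  {v | v ∈ nbhd G w (p x) ∧ ∃ y, p y = v ∧ tp y ≠ tp x}.ncard

/-- An agent is isolated if no node of its neighborhood is occupied. -/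
def isolated (G : SimpleGraph V) (w : ℕ) (tp : I → Bool) (p : I → V) (x : I) : Prop :=
  sCount G w tp p x + dCount G w tp p x = 0

/-- The (scalar) cost of agent `x`: `τ` if isolated, otherwise
`max 0 (τ - |N⁺|/(|N⁺| + |N⁻|))`. -/
noncomputable def ucost (G : SimpleGraph V) (w : ℕ) (τ : ℝ) (tp : I → Bool) (p : I → V)
    (x : I) : ℝ :=
  if sCount G w tp p x + dCount G w tp p x = 0 then τ
  else max 0 (τ - (sCount G w tp p x : ℝ) / ((sCount G w tp p x : ℝ) + (dCount G w tp p x : ℝ)))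

/-- An agent is happy if it is not isolated and its local happiness ratio is at least `τ`. -/
def happy (G : SimpleGraph V) (w : ℕ) (τ : ℝ) (tp : I → Bool) (p : I → V) (x : I) : Prop :=
  sCount G w tp p x + dCount G w tp p x ≠ 0 ∧
    τ ≤ (sCount G w tp p x : ℝ) / ((sCount G w tp p x : ℝ) + (dCount G w tp p x : ℝ))

/-- The vector cost of agent `x`: scalar cost together with `d_G(fav_x, p x) + 1`,
to be compared lexicographically. -/
noncomputable def vcost (G : SimpleGraph V) (w : ℕ) (τ : ℝ) (tp : I → Bool) (fav : I → V)
    (p : I → V) (x : I) : ℝ × ℕ :=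
  (ucost G w τ tp p x, G.dist (fav x) (p x) + 1)

/-- The number of colored pairs `Φ(p) = (1/2) · Σ_x |N⁻(p(x))|`. -/
noncomputable def Phi [Fintype I] (G : SimpleGraph V) (w : ℕ) (tp : I → Bool) (p : I → V) : ℝ :=
  (1 / 2) * ∑ x : I, (dCount G w tp p x : ℝ)

/-- The pair potential `(Φ(p), Σ_x d_G(fav_x, p x))`, compared lexicographically. -/
noncomputable def PhiPair [Fintype I] (G : SimpleGraph V) (w : ℕ) (tp : I → Bool) (fav : I → V)
    (p : I → V) : ℝ × ℕ :=
  (Phi G w tp p, ∑ x : I, G.dist (fav x) (p x))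

/-- The placement obtained from `p` by swapping the locations of agents `x` and `y`. -/
def swapP [DecidableEq I] (p : I → V) (x y : I) : I → V := p ∘ Equiv.swap x y

/-- The agents of type `A`. -/
def typeA [Fintype I] (tp : I → Bool) : Finset I := Finset.univ.filter (fun i => tp i = true)

/-- The agents of type `B`. -/
def typeB [Fintype I] (tp : I → Bool) : Finset I := Finset.univ.filter (fun i => tp i = false)

/-- A placement is stable for the uniform SSG if no pair of agents can both strictly
decrease their cost by swapping. -/
def uStable (G : SimpleGraph V) (w : ℕ) (τ : ℝ) (tp : I → Bool) (p : I → V)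
    [DecidableEq I] : Prop :=
  ∀ x y : I, ¬ (ucost G w τ tp (swapP p x y) x < ucost G w τ tp p x ∧
                ucost G w τ tp (swapP p x y) y < ucost G w τ tp p y)

/-- A placement is stable for the SSG with favorite nodes if no pair of agents can both
strictly lexicographically decrease their cost vector by swapping. -/
def vStable (G : SimpleGraph V) (w : ℕ) (τ : ℝ) (tp : I → Bool) (fav : I → V) (p : I → V)
    [DecidableEq I] : Prop :=
  ∀ x y : I, ¬ (toLex (vcost G w τ tp fav (swapP p x y) x) < toLex (vcost G w τ tp fav p x) ∧
                toLex (vcost G w τ tp fav (swapP p x y) y) < toLex (vcost G w τ tp fav p y))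



open Classical in
/-- The weight of the (ordered) pair of nodes `(u,v)` in the jump-game potential:
`1` if both are occupied by agents of different types, `1/3` if at least one is empty,
and `0` otherwise. -/
noncomputable def edgeW (tp : I → Bool) (p : I → V) (u v : V) : ℝ :=
  if ∃ x y : I, p x = u ∧ p y = v ∧ tp x ≠ tp y then 1
  else if (∀ x : I, p x ≠ u) ∨ (∀ y : I, p y ≠ v) then 1 / 3
  else 0

open Classical in
/-- The edge-weight potential `Φ(p) = Σ_{e ∈ E} w_e(p)`, written as half the sum over
ordered adjacent pairs (each edge is counted twice, and `edgeW` is symmetric). -/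
noncomputable def jumpPhi [Fintype V] (G : SimpleGraph V) (tp : I → Bool) (p : I → V) : ℝ :=
  (1 / 2) * ∑ u : V, ∑ v : V, if G.Adj u v then edgeW tp p u v else 0

/-- A placement is stable for the uniform JSG if no agent can strictly decrease her cost
by jumping to an empty node. -/
def jStable (G : SimpleGraph V) (w : ℕ) (τ : ℝ) (tp : I → Bool) (p : I → V)
    [DecidableEq I] : Prop :=
  ∀ (x : I) (v : V), v ∉ Set.range p →
    ¬ (ucost G w τ tp (Function.update p x v) x < ucost G w τ tp p x)

/-- The social cost of a placement: the number of unhappy agents together with the total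
distance cost, compared lexicographically. -/
noncomputable def socialCost [Fintype I] (G : SimpleGraph V) (w : ℕ) (τ : ℝ) (tp : I → Bool)
    (fav : I → V) (p : I → V) : ℕ × ℕ :=
  ({x : I | ¬ happy G w τ tp p x}.ncard, ∑ x : I, (G.dist (fav x) (p x) + 1))

theorem nbhd_one_of_connected {G : SimpleGraph V} (hG : G.Connected) (u : V) :
    nbhd G 1 u = G.neighborSet u := by
  ext v
  refine ⟨fun ⟨hne, hle⟩ => ?_,
    fun hadj => ⟨hadj.ne', (dist_eq_one_iff_adj.mpr hadj).le⟩⟩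
  exact dist_eq_one_iff_adj.mp (hle.antisymm (hG.pos_dist_of_ne hne.symm))

theorem ncard_occupied_nbhd_one [Fintype I] {G : SimpleGraph V} [DecidableRel G.Adj]
    (hG : G.Connected) {p : I → V} (hp : p.Injective) (x : I) (P : I → Prop) [DecidablePred P] :
    {v | v ∈ nbhd G 1 (p x) ∧ ∃ y, p y = v ∧ P y}.ncard =
      #{y | G.Adj (p x) (p y) ∧ P y} := by
  rw [← Set.ncard_coe_finset, ← Set.ncard_image_of_injective _ hp]
  congr 1
  ext v
  simp only [nbhd_one_of_connected hG, mem_neighborSet, Set.mem_ofPred_eq, Set.mem_image,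
    coe_filter_univ]
  constructor
  · rintro ⟨hadj, y, rfl, hy⟩
    exact ⟨y, ⟨hadj, hy⟩, rfl⟩
  · rintro ⟨y, ⟨hadj, hy⟩, rfl⟩
    exact ⟨hadj, y, rfl, hy⟩

theorem sCount_one_eq [Fintype I] {G : SimpleGraph V} [DecidableRel G.Adj] (hG : G.Connected)
    (tp : I → Bool) {p : I → V} (hp : p.Injective) (x : I) :
    sCount G 1 tp p x = #{y | G.Adj (p x) (p y) ∧ tp y = tp x} :=
  ncard_occupied_nbhd_one hG hp x (tp · = tp x)

theorem dCount_one_eq [Fintype I] {G : SimpleGraph V} [DecidableRel G.Adj] (hG : G.Connected)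
    (tp : I → Bool) {p : I → V} (hp : p.Injective) (x : I) :
    dCount G 1 tp p x = #{y | G.Adj (p x) (p y) ∧ tp y ≠ tp x} :=
  ncard_occupied_nbhd_one hG hp x (tp · ≠ tp x)

theorem ucost_eq_of_counts {G : SimpleGraph V} {w : ℕ} {τ : ℝ} {tp : I → Bool} {p : I → V}
    {x : I} {s d : ℕ} (hs : sCount G w tp p x = s) (hd : dCount G w tp p x = d)
    (hsd : s + d ≠ 0) :
    ucost G w τ tp p x = max 0 (τ - s / (s + d)) := by
  rw [ucost, hs, hd, if_neg hsd]

theorem swapP_injective [DecidableEq I] {p : I → V} (hp : p.Injective) (x y : I) :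
    (swapP p x y).Injective :=
  hp.comp (Equiv.swap x y).injective

def spider : SimpleGraph (Fin 6) :=
  fromRel fun a b => (a, b) ∈ [(0, 1), (0, 3), (0, 4), (0, 5), (1, 2)]

instance : DecidableRel spider.Adj := fun _ _ => inferInstanceAs (Decidable (_ ∧ _))

def spiderType : Fin 6 → Bool := fun i => i == 2 || i == 3

theorem spider_connected : spider.Connected :=
  connected_iff _ |>.mpr ⟨by decide, inferInstance⟩

theorem spider_not_regular : (spider.neighborSet 0).ncard ≠ (spider.neighborSet 2).ncard := by
  rw [Set.ncard_eq_toFinset_card', Set.ncard_eq_toFinset_card']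
  decide

theorem spider_ucost_swap_lt_left :
    ucost spider 1 (6 / 7) spiderType (swapP id 0 2) 0 <
      ucost spider 1 (6 / 7) spiderType id 0 := by
  rw [ucost_eq_of_counts (s := 1) (d := 0) ?_ ?_ one_ne_zero,
    ucost_eq_of_counts (s := 3) (d := 1) ?_ ?_ (by norm_num)]
  · norm_num
  all_goals
    simp only [sCount_one_eq spider_connected, dCount_one_eq spider_connected,
      swapP_injective, Function.injective_id]
    decide

theorem spider_ucost_swap_lt_right :
    ucost spider 1 (6 / 7) spiderType (swapP id 0 2) 2 <
      ucost spider 1 (6 / 7) spiderType id 2 := by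
  rw [ucost_eq_of_counts (s := 1) (d := 3) ?_ ?_ (by norm_num),
    ucost_eq_of_counts (s := 0) (d := 1) ?_ ?_ one_ne_zero]
  · norm_num
  all_goals
    simp only [sCount_one_eq spider_connected, dCount_one_eq spider_connected,
      swapP_injective, Function.injective_id]
    decide

theorem spider_Phi_lt_Phi_swap :
    Phi spider 1 spiderType id < Phi spider 1 spiderType (swapP id 0 2) := by
  have before : ∑ x, dCount spider 1 spiderType id x = 2 * 2 := by
    simp only [dCount_one_eq spider_connected _ Function.injective_id]
    decide
  have after : ∑ x, dCount spider 1 spiderType (swapP id 0 2) x = 2 * 3 := by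
    simp only [dCount_one_eq spider_connected _ (swapP_injective Function.injective_id 0 2)]
    decide
  simp only [Phi, ← Nat.cast_sum, before, after]
  norm_num

end Schelling

open Schelling

/-- The number of colored pairs `Φ` is not an ordinal potential function for
the uniform swap Schelling game on non-regular networks: there exist a finite connected
non-regular graph `G`, window size `w = 1`, tolerance `τ = 6/7`, disjoint agent sets, a
bijective placement `p` and an improving swap producing `p'` with `Φ(p') > Φ(p)`. -/
theorem uSSG_Phi_not_potential_nonregular :
    ∃ (V : Type) (_ : Fintype V) (I : Type) (_ : Fintype I) (_ : DecidableEq I)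
      (G : SimpleGraph V) (tp : I → Bool) (p : I → V) (x y : I),
      G.Connected ∧
      (∃ u v : V, (G.neighborSet u).ncard ≠ (G.neighborSet v).ncard) ∧
      2 ≤ (typeA tp).card ∧ 2 ≤ (typeB tp).card ∧
      Function.Bijective p ∧
      ucost G 1 (6 / 7) tp (swapP p x y) x < ucost G 1 (6 / 7) tp p x ∧
      ucost G 1 (6 / 7) tp (swapP p x y) y < ucost G 1 (6 / 7) tp p y ∧
      Phi G 1 tp p < Phi G 1 tp (swapP p x y) :=
  ⟨Fin 6, inferInstance, Fin 6, inferInstance, inferInstance, spider, spiderType, id, 0, 2,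
    spider_connected, ⟨0, 2, spider_not_regular⟩, by decide, by decide, Function.bijective_id,
    spider_ucost_swap_lt_left, spider_ucost_swap_lt_right, spider_Phi_lt_Phi_swap⟩
end

section
/- In the swap Schelling game with individual favorite nodes and tolerance parameter τ ≥ 1/2 on a regular network, the pair Φ(p) = ((1/2)·Σ_x |N⁻(p(x))|, Σ_x d_G(fav_x, p(x))), ordered lexicographically, is an ordinal potential function: for every window size w ≥ 1, if every node of G has the same number k of nodes within distance w (|N_w(u)| = k for all u ∈ V), then for every bijective placement p and every improving swap producing the placement p', one has Φ(p') <_lex Φ(p). Consequently the SSG with τ ≥ 1/2 on regular networks is a potential game. -/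
open SimpleGraph Finset

/-! Write `2Φ` as a double sum over ordered pairs of agents of different types placed within
distance `w`. A swap of `x` and `y` changes only the pairs meeting `{x, y}`, so `Φ` changes by
`(d' x + d' y) - (d x + d y)`, where `s, d` (resp. `s', d'`) count same- and other-type
neighbours before (resp. after) the swap. On a regular network `s + d = k` for every agent.

If `x` and `y` have the same type, the swap permutes agents within a type, so `Φ` is unchanged
and `x`, `y` exchange their first cost components; both can weakly improve only if these are
equal. If the types differ, let `ε = 1` if `p x` and `p y` are within distance `w` and `ε = 0`
otherwise. Then `s' x + ε = d y` and `s' y + ε = d x`, so `δ := s' x - s x = s' y - s y` and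
`Φ' - Φ = -2δ`. If `δ < 0`, both agents lose same-type neighbours without getting worse off,
which forces `τ k ≤ s' x, s' y`; with `τ ≥ 1/2` this gives `k ≤ s' x + s' y = 2k - s x - s y - 2ε`,
contradicting `δ < 0`. Hence `Φ` never increases, and when it stays equal both first cost
components are unchanged, so both distance costs strictly drop. -/

theorem sum_sum_eq_two_nsmul_of_supported_on_cut {ι M : Type*} [Fintype ι] [AddCommMonoid M]
    (s : Finset ι) (h : ι → ι → M) (hsymm : ∀ i j, h i j = h j i)
    (hin : ∀ i ∈ s, ∀ j ∈ s, h i j = 0) (hout : ∀ i ∉ s, ∀ j ∉ s, h i j = 0) :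
    ∑ i, ∑ j, h i j = 2 • ∑ i ∈ s, ∑ j, h i j := by
  classical
  have hsplit : ∀ i j, h i j = (if i ∈ s then h i j else 0) + (if j ∈ s then h j i else 0) := by
    intro i j
    by_cases hi : i ∈ s <;> by_cases hj : j ∈ s <;> simp [hi, hj, hin, hout, hsymm i j]
  calc ∑ i, ∑ j, h i j
      = ∑ i, ∑ j, (if i ∈ s then h i j else 0) + ∑ i, ∑ j, (if j ∈ s then h j i else 0) := by
        rw [← Finset.sum_add_distrib]
        exact Finset.sum_congr rfl fun i _ => by
          rw [← Finset.sum_add_distrib]; exact Finset.sum_congr rfl fun j _ => hsplit i j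
    _ = 2 • ∑ i ∈ s, ∑ j, h i j := by
        rw [Finset.sum_comm (f := fun i j => if j ∈ s then h j i else 0)]
        simp only [Finset.sum_ite_irrel, Finset.sum_const_zero, Finset.sum_ite_mem,
          Finset.univ_inter, two_nsmul]

theorem mul_le_of_max_sub_div_le {τ s s' k : ℝ} (hk : 0 < k) (hlt : s' < s)
    (h : max 0 (τ - s' / k) ≤ max 0 (τ - s / k)) : τ * k ≤ s' := by
  by_contra! hc
  have hpos : 0 < τ - s' / k := by rw [sub_pos, div_lt_iff₀ hk]; exact hc
  have hdec : τ - s / k < τ - s' / k := sub_lt_sub_left (div_lt_div_of_pos_right hlt hk) τ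
  exact (max_lt hpos hdec).not_ge (h.trans' (le_max_right _ _))

namespace Schelling

variable {V I : Type*} (G : SimpleGraph V) (w : ℕ) (tp : I → Bool)

theorem mem_nbhd_comm {u v : V} : v ∈ nbhd G w u ↔ u ∈ nbhd G w v := by
  simp only [nbhd, Set.mem_ofPred_eq, ne_comm, SimpleGraph.dist_comm]

theorem notMem_nbhd_self (u : V) : u ∉ nbhd G w u := fun h => h.1 rfl

theorem ncard_occupied_eq {p : I → V} (hp : p.Injective) (S : Set V) (P : I → Prop) :
    {v | v ∈ S ∧ ∃ y, p y = v ∧ P y}.ncard = {y | p y ∈ S ∧ P y}.ncard := by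
  rw [← Set.ncard_image_of_injective _ hp]
  congr 1
  ext v
  constructor
  · rintro ⟨hv, y, rfl, hy⟩; exact ⟨y, ⟨hv, hy⟩, rfl⟩
  · rintro ⟨y, ⟨hv, hy⟩, rfl⟩; exact ⟨hv, y, rfl, hy⟩

theorem sCount_eq_ncard {p : I → V} (hp : p.Injective) (x : I) :
    sCount G w tp p x = {z | p z ∈ nbhd G w (p x) ∧ tp z = tp x}.ncard :=
  ncard_occupied_eq hp _ _

theorem dCount_eq_ncard {p : I → V} (hp : p.Injective) (x : I) :
    dCount G w tp p x = {z | p z ∈ nbhd G w (p x) ∧ tp z ≠ tp x}.ncard :=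
  ncard_occupied_eq hp _ _

theorem sCount_add_dCount [Finite I] {p : I → V} (hp : p.Bijective) (x : I) :
    sCount G w tp p x + dCount G w tp p x = (nbhd G w (p x)).ncard := by
  rw [sCount_eq_ncard G w tp hp.1, dCount_eq_ncard G w tp hp.1, ← Set.ncard_union_eq,
    ← Set.ncard_preimage_of_injective_subset_range hp.1 (by simp [hp.2.range_eq])]
  · congr 1
    ext z
    simp only [Set.mem_union, Set.mem_ofPred_eq, Set.mem_preimage]
    tauto
  · exact Set.disjoint_left.2 fun z hs hd => hd.2 hs.2

theorem sCount_comp_perm (p : I → V) {σ : Equiv.Perm I} (hσ : ∀ i, tp (σ i) = tp i) (x : I) :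
    sCount G w tp (p ∘ σ) x = sCount G w tp p (σ x) := by
  simp only [sCount, Function.comp_apply, ← hσ x]
  congr! 4 with v
  exact σ.exists_congr fun y => by simp only [hσ]

theorem dCount_comp_perm (p : I → V) {σ : Equiv.Perm I} (hσ : ∀ i, tp (σ i) = tp i) (x : I) :
    dCount G w tp (p ∘ σ) x = dCount G w tp p (σ x) := by
  simp only [dCount, Function.comp_apply, ← hσ x]
  congr! 4 with v
  exact σ.exists_congr fun y => by simp only [hσ]

theorem ucost_comp_perm (τ : ℝ) (p : I → V) {σ : Equiv.Perm I} (hσ : ∀ i, tp (σ i) = tp i)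
    (x : I) : ucost G w τ tp (p ∘ σ) x = ucost G w τ tp p (σ x) := by
  simp only [ucost, sCount_comp_perm G w tp p hσ, dCount_comp_perm G w tp p hσ]

theorem Phi_comp_perm [Fintype I] (p : I → V) {σ : Equiv.Perm I} (hσ : ∀ i, tp (σ i) = tp i) :
    Phi G w tp (p ∘ σ) = Phi G w tp p := by
  simp only [Phi, dCount_comp_perm G w tp p hσ,
    Equiv.sum_comp σ (fun x => (dCount G w tp p x : ℝ))]

theorem swapP_comm [DecidableEq I] (p : I → V) (x y : I) : swapP p x y = swapP p y x := by
  rw [swapP, swapP, Equiv.swap_comm]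

open Classical in
theorem sCount_swapP_add_ite [Finite I] [DecidableEq I] {p : I → V} (hp : p.Injective) {x y : I}
    (htp : tp x ≠ tp y) :
    sCount G w tp (swapP p x y) x + (if p x ∈ nbhd G w (p y) then 1 else 0) =
      dCount G w tp p y := by
  have hsets : {z | swapP p x y z ∈ nbhd G w (swapP p x y x) ∧ tp z = tp x} =
      {z | p z ∈ nbhd G w (p y) ∧ tp z ≠ tp y} \ {x} := by
    ext z
    rcases eq_or_ne z x with rfl | hzx
    · simp [swapP, notMem_nbhd_self]
    rcases eq_or_ne z y with rfl | hzy
    · simp [swapP, notMem_nbhd_self, htp.symm]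
    simp only [swapP, Function.comp_apply, Equiv.swap_apply_left,
      Equiv.swap_apply_of_ne_of_ne hzx hzy, Set.mem_ofPred_eq, Set.mem_sdiff,
      Set.mem_singleton_iff, hzx, not_false_eq_true, and_true]
    revert htp; cases tp x <;> cases tp y <;> cases tp z <;> simp
  have hp' : (swapP p x y).Injective := hp.comp (Equiv.injective _)
  rw [sCount_eq_ncard G w tp hp', dCount_eq_ncard G w tp hp, hsets]
  split_ifs with hxy
  · exact Set.ncard_sdiff_singleton_add_one ⟨hxy, htp⟩
  · rw [Set.sdiff_singleton_eq_self fun hx => hxy hx.1, add_zero]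

open Classical in
theorem dCount_eq_sum [Fintype I] {p : I → V} (hp : p.Injective) (x : I) :
    (dCount G w tp p x : ℝ) = ∑ z, if p z ∈ nbhd G w (p x) ∧ tp z ≠ tp x then 1 else 0 := by
  rw [dCount_eq_ncard G w tp hp, Finset.sum_boole, Set.ncard_eq_toFinset_card']
  simp

theorem Phi_swapP_sub [Fintype I] [DecidableEq I] {p : I → V} (hp : p.Injective) {x y : I}
    (hxy : x ≠ y) :
    Phi G w tp (swapP p x y) - Phi G w tp p =
      (dCount G w tp (swapP p x y) x + dCount G w tp (swapP p x y) y : ℝ) -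
        (dCount G w tp p x + dCount G w tp p y) := by
  classical
  set p' := swapP p x y
  have hp' : p'.Injective := hp.comp (Equiv.injective _)
  let g : (I → V) → I → I → ℝ := fun q z z' =>
    if q z' ∈ nbhd G w (q z) ∧ tp z' ≠ tp z then 1 else 0
  have hrow : ∀ z, ∑ z', (g p' z z' - g p z z') = dCount G w tp p' z - dCount G w tp p z :=
    fun z => by rw [Finset.sum_sub_distrib, dCount_eq_sum G w tp hp', dCount_eq_sum G w tp hp]
  have hsymm : ∀ q z z', g q z z' = g q z' z := fun q z z' => by
    simp only [g, mem_nbhd_comm G w (u := q z), ne_comm]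
  have hcut := sum_sum_eq_two_nsmul_of_supported_on_cut {x, y} (fun z z' => g p' z z' - g p z z')
    (fun z z' => by simp only [hsymm _ z z'])
    (fun z hz z' hz' => by
      simp only [Finset.mem_insert, Finset.mem_singleton] at hz hz'
      rcases hz with rfl | rfl <;> rcases hz' with rfl | rfl <;>
        simp [g, p', swapP, notMem_nbhd_self] <;> rw [mem_nbhd_comm G w, sub_self])
    (fun z hz z' hz' => by
      simp only [Finset.mem_insert, Finset.mem_singleton, not_or] at hz hz'
      simp [g, p', swapP, Equiv.swap_apply_of_ne_of_ne hz.1 hz.2,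
        Equiv.swap_apply_of_ne_of_ne hz'.1 hz'.2])
  calc Phi G w tp p' - Phi G w tp p = (1 / 2) * ∑ z, ∑ z', (g p' z z' - g p z z') := by
        simp only [Phi, hrow, Finset.sum_sub_distrib]; ring
    _ = _ := by rw [hcut, Finset.sum_pair hxy, hrow, hrow, two_nsmul]; ring

theorem sum_swapP_lt {M : Type*} [AddCommMonoid M] [PartialOrder M] [IsOrderedCancelAddMonoid M]
    [Fintype I] [DecidableEq I] (f : I → V → M) {p : I → V} {x y : I}
    (hx : f x (swapP p x y x) < f x (p x)) (hy : f y (swapP p x y y) < f y (p y)) :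
    ∑ z, f z (swapP p x y z) < ∑ z, f z (p z) := by
  refine Finset.sum_lt_sum (fun z _ => ?_) ⟨x, Finset.mem_univ _, hx⟩
  rcases eq_or_ne z x with rfl | hzx
  · exact hx.le
  rcases eq_or_ne z y with rfl | hzy
  · exact hy.le
  simp [swapP, Equiv.swap_apply_of_ne_of_ne hzx hzy]

theorem ucost_eq_max {τ : ℝ} (hτ : 0 ≤ τ) {k : ℕ} {p : I → V} {x : I}
    (h : sCount G w tp p x + dCount G w tp p x = k) :
    ucost G w τ tp p x = max 0 (τ - sCount G w tp p x / k) := by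
  rw [ucost, ← h]
  split_ifs with h0
  · rw [h0, Nat.cast_zero, div_zero, sub_zero, max_eq_right hτ]
  · push_cast; rfl

theorem Phi_swapP_eq_of_tp_eq [Fintype I] [DecidableEq I] {τ : ℝ} (p : I → V) {x y : I}
    (htp : tp x = tp y)
    (hx : ucost G w τ tp (swapP p x y) x ≤ ucost G w τ tp p x)
    (hy : ucost G w τ tp (swapP p x y) y ≤ ucost G w τ tp p y) :
    Phi G w tp (swapP p x y) = Phi G w tp p ∧
      ucost G w τ tp (swapP p x y) x = ucost G w τ tp p x ∧
      ucost G w τ tp (swapP p x y) y = ucost G w τ tp p y := by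
  have hσ : ∀ i, tp (Equiv.swap x y i) = tp i := fun i => by
    rcases eq_or_ne i x with rfl | hix
    · rw [Equiv.swap_apply_left, htp]
    rcases eq_or_ne i y with rfl | hiy
    · rw [Equiv.swap_apply_right, htp]
    rw [Equiv.swap_apply_of_ne_of_ne hix hiy]
  have hcx : ucost G w τ tp (swapP p x y) x = ucost G w τ tp p y := by
    rw [swapP, ucost_comp_perm G w tp τ p hσ, Equiv.swap_apply_left]
  have hcy : ucost G w τ tp (swapP p x y) y = ucost G w τ tp p x := by
    rw [swapP, ucost_comp_perm G w tp τ p hσ, Equiv.swap_apply_right]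
  rw [hcx] at hx ⊢
  rw [hcy] at hy ⊢
  exact ⟨Phi_comp_perm G w tp p hσ, le_antisymm hx hy, le_antisymm hy hx⟩

theorem Phi_swapP_lt_or_eq_of_tp_ne [Fintype I] [DecidableEq I] {k : ℕ}
    (hreg : ∀ u, (nbhd G w u).ncard = k) {τ : ℝ} (hτ : 1 / 2 ≤ τ) {p : I → V}
    (hp : p.Bijective) {x y : I} (htp : tp x ≠ tp y)
    (hx : ucost G w τ tp (swapP p x y) x ≤ ucost G w τ tp p x)
    (hy : ucost G w τ tp (swapP p x y) y ≤ ucost G w τ tp p y) :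
    Phi G w tp (swapP p x y) < Phi G w tp p ∨
      Phi G w tp (swapP p x y) = Phi G w tp p ∧
        ucost G w τ tp (swapP p x y) x = ucost G w τ tp p x ∧
        ucost G w τ tp (swapP p x y) y = ucost G w τ tp p y := by
  classical
  have hxy : x ≠ y := fun h => htp (congrArg tp h)
  have hp' : (swapP p x y).Bijective := hp.comp (Equiv.swap x y).bijective
  have hsd := fun z => (sCount_add_dCount G w tp hp z).trans (hreg _)
  have hsd' := fun z => (sCount_add_dCount G w tp hp' z).trans (hreg _)
  obtain ⟨ε, hεx, hεy⟩ : ∃ ε, sCount G w tp (swapP p x y) x + ε = dCount G w tp p y ∧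
      sCount G w tp (swapP p x y) y + ε = dCount G w tp p x :=
    ⟨_, sCount_swapP_add_ite G w tp hp.1 htp, by
      simpa only [swapP_comm p y x, mem_nbhd_comm G w (u := p y)] using
        sCount_swapP_add_ite G w tp hp.1 htp.symm⟩
  have hPhi := Phi_swapP_sub G w tp hp.1 hxy
  have hτ0 : 0 ≤ τ := by linarith
  rw [ucost_eq_max G w tp hτ0 (hsd' x), ucost_eq_max G w tp hτ0 (hsd x)] at hx ⊢
  rw [ucost_eq_max G w tp hτ0 (hsd' y), ucost_eq_max G w tp hτ0 (hsd y)] at hy ⊢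
  set s := sCount G w tp p
  set d := dCount G w tp p
  set s' := sCount G w tp (swapP p x y)
  set d' := dCount G w tp (swapP p x y)
  have hkx := hsd x; have hky := hsd y; have hkx' := hsd' x; have hky' := hsd' y
  rcases lt_trichotomy (s' x) (s x) with h | h | h
  · exfalso
    have hk : (0 : ℝ) < k := by exact_mod_cast (show 0 < k by omega)
    have h₁ := mul_le_of_max_sub_div_le hk (by exact_mod_cast h) hx
    have h₂ := mul_le_of_max_sub_div_le hk (by exact_mod_cast (show s' y < s y by omega)) hy
    have hk₂ : k ≤ s' x + s' y := by exact_mod_cast (show (k : ℝ) ≤ s' x + s' y by nlinarith)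
    omega
  · have hy' : s' y = s y := by omega
    refine .inr ⟨?_, by rw [h], by rw [hy']⟩
    rw [← sub_eq_zero, hPhi, sub_eq_zero]
    exact_mod_cast (show d' x + d' y = d x + d y by omega)
  · left
    rw [← sub_neg, hPhi, sub_neg]
    exact_mod_cast (show d' x + d' y < d x + d y by omega)

end Schelling

open Schelling

theorem SSG_regular_PhiPair_is_potential_general {V I : Type*} [Fintype I] [DecidableEq I]
    (G : SimpleGraph V)
    (w : ℕ)
    (k : ℕ) (hreg : ∀ u : V, (nbhd G w u).ncard = k)
    (τ : ℝ) (hτ : 1 / 2 ≤ τ)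
    (tp : I → Bool)
    (fav : I → V)
    (p : I → V) (hp : Function.Bijective p)
    (x y : I)
    (hx : toLex (vcost G w τ tp fav (swapP p x y) x) < toLex (vcost G w τ tp fav p x))
    (hy : toLex (vcost G w τ tp fav (swapP p x y) y) < toLex (vcost G w τ tp fav p y)) :
    toLex (PhiPair G w tp fav (swapP p x y)) < toLex (PhiPair G w tp fav p) := by
  obtain ⟨hx₁, hx₂⟩ := Prod.Lex.toLex_lt_toLex'.1 hx
  obtain ⟨hy₁, hy₂⟩ := Prod.Lex.toLex_lt_toLex'.1 hy
  obtain hlt | ⟨heq, hcx, hcy⟩ : Phi G w tp (swapP p x y) < Phi G w tp p ∨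
      Phi G w tp (swapP p x y) = Phi G w tp p ∧
        ucost G w τ tp (swapP p x y) x = ucost G w τ tp p x ∧
        ucost G w τ tp (swapP p x y) y = ucost G w τ tp p y := by
    by_cases htp : tp x = tp y
    · exact .inr (Phi_swapP_eq_of_tp_eq G w tp p htp hx₁ hy₁)
    · exact Phi_swapP_lt_or_eq_of_tp_ne G w tp hreg hτ hp htp hx₁ hy₁
  · exact Prod.Lex.toLex_lt_toLex.2 (.inl hlt)
  · exact Prod.Lex.toLex_lt_toLex.2 (.inr ⟨heq, sum_swapP_lt (fun z => G.dist (fav z))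
      (Nat.lt_of_add_lt_add_right (hx₂ hcx)) (Nat.lt_of_add_lt_add_right (hy₂ hcy))⟩)

/-- In the swap Schelling game with individual favorite nodes and `τ ≥ 1/2`
on a regular network, the pair `Φ(p) = ((1/2)·Σ_x |N⁻(p(x))|, Σ_x d_G(fav_x, p(x)))`,
ordered lexicographically, is an ordinal potential function: every improving swap strictly
lexicographically decreases it.  Consequently the SSG with `τ ≥ 1/2` on regular networks is
a potential game. -/
theorem SSG_regular_PhiPair_is_potential {V I : Type*} [Fintype V] [Fintype I] [DecidableEq I]
    (G : SimpleGraph V) (hG : G.Connected)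
    (w : ℕ) (hw : 1 ≤ w)
    (k : ℕ) (hreg : ∀ u : V, (nbhd G w u).ncard = k)
    (τ : ℝ) (hτ : 1 / 2 ≤ τ) (hτ1 : τ ≤ 1)
    (tp : I → Bool) (hA : 2 ≤ (typeA tp).card) (hB : 2 ≤ (typeB tp).card)
    (fav : I → V)
    (p : I → V) (hp : Function.Bijective p)
    (x y : I)
    (hx : toLex (vcost G w τ tp fav (swapP p x y) x) < toLex (vcost G w τ tp fav p x))
    (hy : toLex (vcost G w τ tp fav (swapP p x y) y) < toLex (vcost G w τ tp fav p y)) :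
    toLex (PhiPair G w tp fav (swapP p x y)) < toLex (PhiPair G w tp fav p) :=
  SSG_regular_PhiPair_is_potential_general G w k hreg τ hτ tp fav p hp x y hx hy
end
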